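/- Suppose J′₀ ⊆ ℤ/fℤ and, for each ν ∈ M̃, a subset J^ν₀ ⊆ ℤ/fℤ are given such that Σ(s(b′,J′₀)) ≡ Σ(s(b^ν,J^ν₀)) (mod p^f − 1) and Σ(t(b′,J′₀)) ≡ Σ(t(b^ν,J^ν₀)) (mod p^f − 1) for every ν ∈ M̃. Then for each μ ∈ M̃ there exist subsets J′, J^μ ⊆ ℤ/fℤ with Σ(s(b′,J′)) ≡ Σ(s(b′,J′₀)), Σ(t(b′,J′)) ≡ Σ(t(b′,J′₀)), Σ(s(b^μ,J^μ)) ≡ Σ(s(b^μ,J^μ₀)) and Σ(t(b^μ,J^μ)) ≡ Σ(t(b^μ,J^μ₀)) (all mod p^f − 1), such that i ∈ J′ ⟺ i ∈ J^μ for all i ∉ T_μ. -/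
import Mathlib


open scoped Classical
noncomputable section

/-- `Σ(v) = Σ_{i=0}^{f−1} v_i · p^{f−1−i}`. -/
def Sig (p f : ℕ) (v : ZMod f → ℤ) : ℤ :=
  ∑ i ∈ Finset.range f, v (i : ZMod f) * (p : ℤ) ^ (f - 1 - i)

/-- `A_i(c,d) = Σ_{j=1}^{f} p^{f−j} · (c_{i+j} − d_{i+j})`. -/
def Ai (p f : ℕ) (c d : ZMod f → ℤ) (i : ZMod f) : ℤ :=
  ∑ j ∈ Finset.Icc 1 f, (p : ℤ) ^ (f - j) * (c (i + (j : ZMod f)) - d (i + (j : ZMod f)))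

/-- `T_ν`: the maximal run of indices with `k`-value 1 following `ν`. -/
def Trun (f : ℕ) (k : ZMod f → ℤ) (ν : ZMod f) : Set (ZMod f) :=
  {i | ∃ s : ℕ, 1 ≤ s ∧ i = ν + (s : ZMod f) ∧
        ∀ j : ℕ, 1 ≤ j → j ≤ s → k (ν + (j : ZMod f)) = 1}

/-- `b_{i,1} = k_i − 1`. -/
def b1 (f : ℕ) (k : ZMod f → ℤ) : ZMod f → ℤ := fun i => k i - 1

/-- the constantly zero second component. -/
def zero2 (f : ℕ) : ZMod f → ℤ := fun _ => 0

/-- `b′_{i,1}`. -/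
def bp1 (p f : ℕ) (k : ZMod f → ℤ) : ZMod f → ℤ := fun i =>
  if k i = 1 then (if k (i + 1) = 1 then (p : ℤ) - 1 else (p : ℤ))
  else (if k (i + 1) = 1 then k i - 2 else k i - 1)

/-- `b^μ_{i,1}`. -/
def bmu1 (p f : ℕ) (k : ZMod f → ℤ) (μ : ZMod f) : ZMod f → ℤ := fun i =>
  if i = μ then k μ - 1 else bp1 p f k i

/-- `b^μ_{i,2}`. -/
def bmu2 (f : ℕ) (μ : ZMod f) : ZMod f → ℤ := fun i => if i = μ then -1 else 0

/-- `b^Θ_{i,1}`. -/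
def bth1 (p f : ℕ) (k : ZMod f → ℤ) : ZMod f → ℤ := fun i =>
  if k i = 1 then (if k (i + 1) = 1 then (p : ℤ) - 1 else (p : ℤ)) else k i - 1

/-- `b^Θ_{i,2}`. -/
def bth2 (f : ℕ) (k : ZMod f → ℤ) : ZMod f → ℤ := fun i =>
  if k i ≠ 1 ∧ k (i + 1) = 1 then -1 else 0

/-- `s_i(c,S) = c_{i,1}` if `i ∈ S`, else `c_{i,2}`. -/
def sW (f : ℕ) (c1 c2 : ZMod f → ℤ) (S : Set (ZMod f)) : ZMod f → ℤ :=
  fun i => if i ∈ S then c1 i else c2 i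

/-- `t_i(c,S) = c_{i,2}` if `i ∈ S`, else `c_{i,1}`. -/
def tW (f : ℕ) (c1 c2 : ZMod f → ℤ) (S : Set (ZMod f)) : ZMod f → ℤ :=
  fun i => if i ∈ S then c2 i else c1 i

/-- The set `𝒫′` of Definition 3.7 of the paper. -/
def memP' (p f : ℕ) (r : ZMod f → ℤ) : Prop :=
  (∀ i, r i = 0 ∨ r i = 1 ∨ r i = (p : ℤ) - 1 ∨ r i = (p : ℤ)) ∧
  (∀ i, r i = (p : ℤ) → (r (i + 1) = 0 ∨ r (i + 1) = 1)) ∧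
  (∀ i, (r i = 1 ∨ r i = (p : ℤ) - 1) → (r (i + 1) = (p : ℤ) - 1 ∨ r (i + 1) = (p : ℤ))) ∧
  (∀ i, r i = 0 →
    ((∀ j, r j = 0) ∨
      ∃ s t : ℕ, 1 ≤ s ∧ 1 ≤ t ∧
        (∀ j : ℕ, 1 ≤ j → j ≤ s - 1 → r (i + (j : ZMod f)) = 0) ∧
        r (i + (s : ZMod f)) = 1 ∧
        (∀ j : ℕ, 1 ≤ j → j ≤ t - 1 → r (i - (j : ZMod f)) = 0) ∧
        r (i - (t : ZMod f)) = (p : ℤ)))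

/-- The exceptional case of Theorem 3.9 of the paper. -/
def Exceptional (p f : ℕ) (r : ZMod f → ℤ) (J : Set (ZMod f)) : Prop :=
  memP' p f r ∧ (∀ i, (r i = (p : ℤ) - 1 ∨ r i = (p : ℤ)) → i ∈ J) ∧
    (∀ i, r i = 1 → i ∉ J)

lemma Sig_add (p f : ℕ) (a b : ZMod f → ℤ) :
    Sig p f (fun i => a i + b i) = Sig p f a + Sig p f b := by
  simp [Sig, add_mul, Finset.sum_add_distrib]

lemma Sig_sub (p f : ℕ) (a b : ZMod f → ℤ) :
    Sig p f (fun i => a i - b i) = Sig p f a - Sig p f b := by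
  simp [Sig, sub_mul, Finset.sum_sub_distrib]

lemma Sig_carry (p f : ℕ) (hf : 1 ≤ f) (w : ZMod f → ℤ) :
    Sig p f (fun i => (p:ℤ) * w i - w (i + 1)) = ((p:ℤ)^f - 1) * w 0 := by
  obtain ⟨g, rfl⟩ : ∃ g, f = g + 1 := ⟨f - 1, by omega⟩
  have key : ∀ i ∈ Finset.range (g+1),
      ((p:ℤ) * w (i:ZMod (g+1)) - w ((i:ZMod (g+1)) + 1)) * (p:ℤ)^(g+1-1-i)
      = w (i:ZMod (g+1)) * (p:ℤ)^(g+1-i) - w (((i+1 : ℕ) : ZMod (g+1))) * (p:ℤ)^(g-i) := by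
    intro i hi
    rw [Finset.mem_range] at hi
    have h1 : (p:ℤ)^(g+1-i) = (p:ℤ) * (p:ℤ)^(g-i) := by
      rw [← pow_succ']
      congr 1; omega
    have h2 : ((i:ZMod (g+1)) + 1) = (((i+1 : ℕ)) : ZMod (g+1)) := by push_cast; ring
    have h3 : g+1-1-i = g-i := by omega
    rw [h1, h2, h3]; ring
  rw [Sig, Finset.sum_congr rfl key, Finset.sum_sub_distrib,
    Finset.sum_range_succ' (fun i => w (i:ZMod (g+1)) * (p:ℤ)^(g+1-i)) g,
    Finset.sum_range_succ (fun i => w (((i+1:ℕ)):ZMod (g+1)) * (p:ℤ)^(g-i)) g]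
  have e3 : ∀ i ∈ Finset.range g, w (((i+1:ℕ)):ZMod (g+1)) * (p:ℤ)^(g+1-(i+1))
      = w (((i+1:ℕ)):ZMod (g+1)) * (p:ℤ)^(g-i) := by
    intro i hi; congr 2; omega
  rw [Finset.sum_congr rfl e3]
  have e4 : (((g+1:ℕ)):ZMod (g+1)) = 0 := ZMod.natCast_self (g+1)
  have e5 : ((0:ℕ):ZMod (g+1)) = 0 := by norm_num
  rw [e4, e5, Nat.sub_self, Nat.sub_zero]
  ring

lemma exists_carry (p f : ℕ) (hf : 1 ≤ f) (v : ZMod f → ℤ)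
    (hdvd : ((p:ℤ)^f - 1) ∣ Sig p f v) :
    ∃ w : ZMod f → ℤ, ∀ i, v i = (p:ℤ) * w i - w (i + 1) := by
  haveI : NeZero f := ⟨by omega⟩
  obtain ⟨c, hc⟩ := hdvd
  let W : ℕ → ℤ := fun m => Nat.rec c (fun m acc => (p:ℤ) * acc - v (m : ZMod f)) m
  have hWs : ∀ m, W (m+1) = (p:ℤ) * W m - v (m : ZMod f) := fun m => rfl
  have hform : ∀ m, W m = (p:ℤ)^m * c - ∑ i ∈ Finset.range m, v (i:ZMod f) * (p:ℤ)^(m-1-i) := by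
    intro m; induction m with
    | zero => simp [W]
    | succ m ih =>
      rw [hWs, ih, Finset.sum_range_succ]
      have h1 : ∀ i ∈ Finset.range m, v (i:ZMod f) * (p:ℤ)^(m+1-1-i)
          = (p:ℤ) * (v (i:ZMod f) * (p:ℤ)^(m-1-i)) := by
        intro i hi; rw [Finset.mem_range] at hi
        have h2 : m+1-1-i = (m-1-i)+1 := by omega
        rw [h2, pow_succ]; ring
      rw [Finset.sum_congr rfl h1, ← Finset.mul_sum]
      have h3 : (m + 1 - 1 - m) = 0 := by omega
      rw [h3, pow_zero, pow_succ]
      ring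
  have hWf : W f = W 0 := by
    rw [hform f]
    have h4 : ∑ i ∈ Finset.range f, v (i:ZMod f) * (p:ℤ)^(f-1-i) = Sig p f v := rfl
    rw [h4, hc]
    show _ = c
    ring
  refine ⟨fun i => W i.val, fun i => ?_⟩
  show v i = (p:ℤ) * W i.val - W ((i+1).val)
  have hlt : i.val < f := ZMod.val_lt i
  have hci : ((i.val : ℕ) : ZMod f) = i := ZMod.natCast_zmod_val i
  have hrec := hWs i.val
  rw [hci] at hrec
  have hsucc : i + 1 = (((i.val + 1 : ℕ)) : ZMod f) := by
    conv_lhs => rw [← hci]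
    push_cast; ring
  rcases Nat.lt_or_ge (i.val + 1) f with h | h
  · have hv : (i + 1).val = i.val + 1 := by rw [hsucc, ZMod.val_cast_of_lt h]
    rw [hv]; linarith
  · have hf1 : i.val + 1 = f := by omega
    have hv : (i + 1).val = 0 := by rw [hsucc, hf1, ZMod.natCast_self, ZMod.val_zero]
    rw [hv]
    have h5 : W (i.val + 1) = W 0 := by rw [hf1]; exact hWf
    linarith

lemma carry_bound (p f : ℕ) (hp : 3 ≤ p) (hf : 1 ≤ f) (v w : ZMod f → ℤ)
    (hvw : ∀ i, v i = (p:ℤ) * w i - w (i+1)) (hv : ∀ i, |v i| ≤ (p:ℤ)) :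
    ∀ i, |w i| ≤ 1 := by
  haveI : NeZero f := ⟨by omega⟩
  obtain ⟨i0, -, hmax⟩ := Finset.exists_max_image Finset.univ (fun i => |w i|) ⟨0, Finset.mem_univ 0⟩
  intro i
  have h1 : |w i| ≤ |w i0| := hmax i (Finset.mem_univ i)
  suffices h : |w i0| ≤ 1 by linarith
  have key : (p:ℤ) * |w i0| = |v i0 + w (i0+1)| := by
    have h6 : v i0 + w (i0+1) = (p:ℤ) * w i0 := by rw [hvw i0]; ring
    rw [h6, abs_mul, abs_of_nonneg (show (0:ℤ) ≤ (p:ℤ) by positivity)]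
  have h2 : |w (i0+1)| ≤ |w i0| := hmax (i0+1) (Finset.mem_univ _)
  have h3 : |v i0 + w (i0+1)| ≤ (p:ℤ) + |w i0| := by
    calc |v i0 + w (i0+1)| ≤ |v i0| + |w (i0+1)| := abs_add_le _ _
    _ ≤ (p:ℤ) + |w i0| := by have := hv i0; linarith
  have h4 : (p:ℤ) * |w i0| ≤ (p:ℤ) + |w i0| := by rw [key]; exact h3
  by_contra hcon
  push_neg at hcon
  have h5 : (2:ℤ) ≤ |w i0| := by exact_mod_cast Int.add_one_le_of_lt hcon
  have hp3 : (3:ℤ) ≤ (p:ℤ) := by exact_mod_cast hp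
  nlinarith

lemma carry_step {p a b c : ℤ} (hp : 3 ≤ p) (ha : -1 ≤ a) (ha' : a ≤ 1)
    (hb : -1 ≤ b) (hb' : b ≤ 1) (h : c = p * a - b) :
    (c = -1 → b = 1) ∧ (c = 1 → b = -1) ∧ (2 ≤ c → c ≤ p - 1 → b = 1) ∧
    (1 - p ≤ c → c ≤ -2 → b = -1) := by
  have htri : a = -1 ∨ a = 0 ∨ a = 1 := by omega
  rcases htri with h' | h' | h' <;> subst h' <;>
    [rw [mul_neg_one] at h; rw [mul_zero] at h; rw [mul_one] at h] <;> omega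
lemma tW_modEq_of_sW {p f : ℕ} {N : ℤ} (c1 c2 : ZMod f → ℤ) (S S' : Set (ZMod f))
    (h : Int.ModEq N (Sig p f (sW f c1 c2 S)) (Sig p f (sW f c1 c2 S'))) :
    Int.ModEq N (Sig p f (tW f c1 c2 S)) (Sig p f (tW f c1 c2 S')) := by
  have key : ∀ S : Set (ZMod f), Sig p f (tW f c1 c2 S)
      = Sig p f (fun i => c1 i + c2 i) - Sig p f (sW f c1 c2 S) := by
    intro S
    rw [eq_sub_iff_add_eq, ← Sig_add]
    congr 1; funext i
    by_cases hi : i ∈ S <;> simp [tW, sW, hi] <;> ring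
  rw [key S, key S']
  exact Int.ModEq.sub (Int.ModEq.refl _) h
/-- Lemma A.5 of the paper (minimal μ-matching): given congruent `J′₀` and `J^ν₀` for all
`ν ∈ M̃`, for each `μ ∈ M̃` one can replace them by subsets `J′` and `J^μ` (giving the same
`Σ`-values mod `p^f − 1`) which agree outside `T_μ`. -/
theorem stmt8 (p f : ℕ) (hp : p.Prime) (hodd : Odd p) (hf : 1 ≤ f)
    (k : ZMod f → ℤ)
    (hk : ∀ i, 1 ≤ k i ∧ k i ≤ (p : ℤ))
    (hone : ∃ i, k i = 1) (hnotone : ∃ i, k i ≠ 1)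
    (h21 : ∀ i, ¬(k i = 2 ∧ k (i + 1) = 1))
    (J'0 : Set (ZMod f)) (Jnu0 : ZMod f → Set (ZMod f))
    (hs : ∀ ν, (k ν ≠ 1 ∧ k (ν + 1) = 1) →
      Int.ModEq ((p : ℤ) ^ f - 1)
        (Sig p f (sW f (bp1 p f k) (zero2 f) J'0))
        (Sig p f (sW f (bmu1 p f k ν) (bmu2 f ν) (Jnu0 ν))))
    (ht : ∀ ν, (k ν ≠ 1 ∧ k (ν + 1) = 1) →
      Int.ModEq ((p : ℤ) ^ f - 1)
        (Sig p f (tW f (bp1 p f k) (zero2 f) J'0))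
        (Sig p f (tW f (bmu1 p f k ν) (bmu2 f ν) (Jnu0 ν)))) :
    ∀ μ, (k μ ≠ 1 ∧ k (μ + 1) = 1) →
      ∃ J' Jμ : Set (ZMod f),
        Int.ModEq ((p : ℤ) ^ f - 1)
          (Sig p f (sW f (bp1 p f k) (zero2 f) J'))
          (Sig p f (sW f (bp1 p f k) (zero2 f) J'0)) ∧
        Int.ModEq ((p : ℤ) ^ f - 1)
          (Sig p f (tW f (bp1 p f k) (zero2 f) J'))
          (Sig p f (tW f (bp1 p f k) (zero2 f) J'0)) ∧
        Int.ModEq ((p : ℤ) ^ f - 1)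
          (Sig p f (sW f (bmu1 p f k μ) (bmu2 f μ) Jμ))
          (Sig p f (sW f (bmu1 p f k μ) (bmu2 f μ) (Jnu0 μ))) ∧
        Int.ModEq ((p : ℤ) ^ f - 1)
          (Sig p f (tW f (bmu1 p f k μ) (bmu2 f μ) Jμ))
          (Sig p f (tW f (bmu1 p f k μ) (bmu2 f μ) (Jnu0 μ))) ∧
        (∀ i, i ∉ Trun f k μ → (i ∈ J' ↔ i ∈ Jμ)) := by
  intro μ hμ
  haveI : NeZero f := ⟨by omega⟩
  obtain ⟨hμ1, hμ2⟩ := hμ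
  have hp2 := hp.two_le
  have hp3 : 3 ≤ p := by
    rcases hodd with ⟨m, hm⟩; omega
  have hp3' : (3:ℤ) ≤ (p:ℤ) := by exact_mod_cast hp3
  -- the run length s0
  set P : ℕ → Prop := fun s => ∀ j : ℕ, 1 ≤ j → j ≤ s → k (μ + (j:ZMod f)) = 1 with hPdef
  set s0 : ℕ := Nat.findGreatest P f with hs0def
  have hP1 : P 1 := by
    intro j h1 h2
    have hj : j = 1 := by omega
    subst hj
    simpa using hμ2
  have hs01 : 1 ≤ s0 := Nat.le_findGreatest hf hP1
  have hs0spec : P s0 := Nat.findGreatest_spec hf hP1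
  have hs0f : s0 < f := by
    rcases Nat.lt_or_ge s0 f with h | h
    · exact h
    · exfalso
      have hs0f' : s0 = f := le_antisymm (Nat.findGreatest_le f) h
      have h5 := hs0spec f (by omega) (by omega)
      rw [ZMod.natCast_self, add_zero] at h5
      exact hμ1 h5
  have hklast : k (μ + ((s0+1 : ℕ) : ZMod f)) ≠ 1 := by
    intro hcon
    have hPs : P (s0+1) := by
      intro j h1 h2
      rcases Nat.lt_or_ge j (s0+1) with h' | h'
      · exact hs0spec j h1 (by omega)
      · have hj : j = s0 + 1 := by omega
        subst hj; exact hcon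
    have := Nat.le_findGreatest (by omega : s0 + 1 ≤ f) hPs
    omega
  have hinj : ∀ a b : ℕ, a < f → b < f → ((a : ZMod f) = (b : ZMod f)) → a = b := by
    intro a b ha hb hab
    have := congrArg ZMod.val hab
    rwa [ZMod.val_cast_of_lt ha, ZMod.val_cast_of_lt hb] at this
  -- characterization of the run
  have hT : ∀ i, i ∈ Trun f k μ ↔ ∃ j : ℕ, 1 ≤ j ∧ j ≤ s0 ∧ i = μ + (j : ZMod f) := by
    intro i
    constructor
    · rintro ⟨s, hs1, rfl, hall⟩
      have hsf : s < f := by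
        by_contra hcon
        push_neg at hcon
        have h5 := hall f (by omega) (by omega)
        rw [ZMod.natCast_self, add_zero] at h5
        exact hμ1 h5
      exact ⟨s, hs1, Nat.le_findGreatest (by omega) hall, rfl⟩
    · rintro ⟨j, h1, h2, rfl⟩
      exact ⟨j, h1, rfl, fun j' a b => hs0spec j' a (le_trans b h2)⟩
  have hμT : μ ∉ Trun f k μ := by
    intro hcon
    obtain ⟨j, h1, h2, h3⟩ := (hT μ).1 hcon
    have h4 : (j : ZMod f) = ((0:ℕ) : ZMod f) := by
      rw [Nat.cast_zero]
      exact left_eq_add.mp h3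
    have := hinj j 0 (by omega) (by omega) h4
    omega
  have hμ1T : μ + 1 ∈ Trun f k μ := by
    refine (hT _).2 ⟨1, le_refl 1, hs01, ?_⟩
    norm_num
  have hTk : ∀ i, i ∈ Trun f k μ → k i = 1 := by
    intro i hi
    obtain ⟨j, h1, h2, rfl⟩ := (hT i).1 hi
    exact hs0spec j h1 h2
  have hTsucc1 : ∀ i, i ∈ Trun f k μ → k (i+1) = 1 → i + 1 ∈ Trun f k μ := by
    intro i hi hk2
    obtain ⟨j, h1, h2, rfl⟩ := (hT i).1 hi
    rcases Nat.lt_or_ge j s0 with h' | h'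
    · refine (hT _).2 ⟨j+1, by omega, by omega, ?_⟩
      push_cast; ring
    · exfalso
      have hj : j = s0 := by omega
      have heq : (μ + ((j:ℕ) : ZMod f)) + 1 = μ + ((j+1 : ℕ) : ZMod f) := by
        push_cast; ring
      rw [heq, hj] at hk2
      exact hklast hk2
  have hTpred : ∀ i : ZMod f, i + 1 ∈ Trun f k μ → i = μ ∨ i ∈ Trun f k μ := by
    intro i hi
    obtain ⟨j, h1, h2, hj⟩ := (hT _).1 hi
    rcases Nat.lt_or_ge j 2 with h' | h'
    · left
      have hj1 : j = 1 := by omega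
      subst hj1
      have h5 : i + 1 = μ + 1 := by rw [hj]; norm_num
      exact add_right_cancel h5
    · right
      refine (hT _).2 ⟨j-1, by omega, by omega, ?_⟩
      have hcast : ((j:ℕ) : ZMod f) = ((j-1 : ℕ) : ZMod f) + 1 := by
        have h6 : (j : ℕ) = (j-1) + 1 := by omega
        rw [h6]; push_cast; ring
      rw [hcast] at hj
      have h5 : i + 1 = (μ + ((j-1 : ℕ) : ZMod f)) + 1 := by rw [hj]; ring
      exact add_right_cancel h5
  -- basic facts about k μ and bp1
  have hk3 : (3:ℤ) ≤ k μ := by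
    have h21μ := h21 μ
    have hkμ := hk μ
    by_contra hcon
    push_neg at hcon
    have h5 : k μ = 1 ∨ k μ = 2 := by omega
    rcases h5 with h | h
    · exact hμ1 h
    · exact h21μ ⟨h, hμ2⟩
  have hkp : k μ ≤ (p:ℤ) := (hk μ).2
  have hbp1μ : bp1 p f k μ = k μ - 2 := by simp [bp1, hμ1, hμ2]
  -- value lemmas
  have hr0val : ∀ i, sW f (bp1 p f k) (zero2 f) J'0 i
      = if i ∈ J'0 then bp1 p f k i else 0 := fun i => rfl
  have hq0val : ∀ i, i ≠ μ → sW f (bmu1 p f k μ) (bmu2 f μ) (Jnu0 μ) i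
      = if i ∈ Jnu0 μ then bp1 p f k i else 0 := by
    intro i hiμ
    simp [sW, bmu1, bmu2, hiμ]
  have hq0μ : sW f (bmu1 p f k μ) (bmu2 f μ) (Jnu0 μ) μ
      = if μ ∈ Jnu0 μ then k μ - 1 else -1 := by
    simp [sW, bmu1, bmu2]
  have hbp1b : ∀ i, 0 ≤ bp1 p f k i ∧ bp1 p f k i ≤ (p:ℤ) := by
    intro i
    have h5 := hk i
    have h6 := hk (i+1)
    simp only [bp1]
    split_ifs <;> constructor <;> omega
  -- the difference function and its carry vector
  set v : ZMod f → ℤ := fun i => sW f (bp1 p f k) (zero2 f) J'0 i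
      - sW f (bmu1 p f k μ) (bmu2 f μ) (Jnu0 μ) i with hvdef
  have hvi : ∀ i, i ≠ μ → v i = (if i ∈ J'0 then bp1 p f k i else 0)
      - (if i ∈ Jnu0 μ then bp1 p f k i else 0) := by
    intro i hiμ
    show sW f (bp1 p f k) (zero2 f) J'0 i - sW f (bmu1 p f k μ) (bmu2 f μ) (Jnu0 μ) i = _
    rw [hr0val, hq0val i hiμ]
  have hvμ : v μ = (if μ ∈ J'0 then k μ - 2 else 0)
      - (if μ ∈ Jnu0 μ then k μ - 1 else -1) := by
    show sW f (bp1 p f k) (zero2 f) J'0 μ - sW f (bmu1 p f k μ) (bmu2 f μ) (Jnu0 μ) μ = _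
    rw [hr0val, hq0μ, hbp1μ]
  have habs : ∀ i, |v i| ≤ (p:ℤ) := by
    intro i
    rw [abs_le]
    by_cases hiμ : i = μ
    · subst hiμ
      rw [hvμ]
      constructor <;> split_ifs <;> omega
    · rw [hvi i hiμ]
      have := hbp1b i
      constructor <;> split_ifs <;> omega
  have hdvd : ((p:ℤ)^f - 1) ∣ Sig p f v := by
    have h5 := (hs μ ⟨hμ1, hμ2⟩).symm.dvd
    rw [hvdef, Sig_sub]
    exact h5
  obtain ⟨w, hvw⟩ := exists_carry p f hf v hdvd
  have hwb : ∀ i, -1 ≤ w i ∧ w i ≤ 1 := by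
    intro i
    exact abs_le.1 (carry_bound p f hp3 hf v w hvw habs i)
  -- direction at μ
  have hdir : (μ ∈ J'0 ∧ w (μ+1) = 1) ∨ (μ ∉ J'0 ∧ w (μ+1) = -1) := by
    have hstep := carry_step hp3' (hwb μ).1 (hwb μ).2 (hwb (μ+1)).1 (hwb (μ+1)).2 (hvw μ)
    by_cases hJ : μ ∈ J'0 <;> by_cases hK : μ ∈ Jnu0 μ
    · left
      refine ⟨hJ, hstep.1 ?_⟩
      rw [hvμ, if_pos hJ, if_pos hK]; ring
    · left
      have hval : v μ = k μ - 1 := by rw [hvμ, if_pos hJ, if_neg hK]; ring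
      exact ⟨hJ, hstep.2.2.1 (by omega) (by omega)⟩
    · right
      have hval : v μ = -(k μ - 1) := by rw [hvμ, if_neg hJ, if_pos hK]; ring
      exact ⟨hJ, hstep.2.2.2 (by omega) (by omega)⟩
    · right
      refine ⟨hJ, hstep.2.1 ?_⟩
      rw [hvμ, if_neg hJ, if_neg hK]; ring
  -- propagation along the run
  have hprop : ∀ i, i ∈ Trun f k μ →
      ((w i = 1 → i ∈ J'0 ∧ (k (i+1) = 1 → w (i+1) = 1)) ∧
       (w i = -1 → i ∉ J'0 ∧ (k (i+1) = 1 → w (i+1) = -1))) := by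
    intro i hi
    have hiμ : i ≠ μ := fun h => hμT (h ▸ hi)
    have hki : k i = 1 := hTk i hi
    have hveq := hvw i
    have hb2 := hwb (i+1)
    have hbp : (k (i+1) = 1 → bp1 p f k i = (p:ℤ) - 1) ∧ (k (i+1) ≠ 1 → bp1 p f k i = (p:ℤ)) := by
      constructor <;> intro h <;> simp [bp1, hki, h]
    have hbpval : bp1 p f k i = (p:ℤ) - 1 ∨ bp1 p f k i = (p:ℤ) := by
      by_cases h : k (i+1) = 1
      · left; exact hbp.1 h
      · right; exact hbp.2 h
    have hvvi : (v i = bp1 p f k i ∧ i ∈ J'0) ∨ (v i = -(bp1 p f k i) ∧ i ∉ J'0) ∨ v i = 0 := by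
      by_cases hJ : i ∈ J'0 <;> by_cases hK : i ∈ Jnu0 μ
      · right; right; rw [hvi i hiμ, if_pos hJ, if_pos hK]; ring
      · left; exact ⟨by rw [hvi i hiμ, if_pos hJ, if_neg hK]; ring, hJ⟩
      · right; left; exact ⟨by rw [hvi i hiμ, if_neg hJ, if_pos hK]; ring, hJ⟩
      · right; right; rw [hvi i hiμ, if_neg hJ, if_neg hK]; ring
    constructor
    · intro hw1
      rw [hw1, mul_one] at hveq
      rcases hvvi with ⟨hv1, hJ⟩ | ⟨hv1, -⟩ | hv1
      · refine ⟨hJ, fun hk2 => ?_⟩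
        rw [hbp.1 hk2] at hv1
        omega
      · exfalso
        rcases hbpval with h | h <;> rw [h] at hv1 <;> omega
      · exfalso; omega
    · intro hw1
      rw [hw1, mul_neg_one] at hveq
      rcases hvvi with ⟨hv1, -⟩ | ⟨hv1, hJ⟩ | hv1
      · exfalso
        rcases hbpval with h | h <;> rw [h] at hv1 <;> omega
      · refine ⟨hJ, fun hk2 => ?_⟩
        rw [hbp.1 hk2] at hv1
        omega
      · exfalso; omega
  rcases hdir with ⟨hJμ, hw1⟩ | ⟨hJμ, hw1⟩
  · -- case μ ∈ J'0 : the whole run is contained in J'0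
    have hchain : ∀ j : ℕ, 1 ≤ j → j ≤ s0 →
        (w (μ + (j:ZMod f)) = 1 ∧ μ + (j:ZMod f) ∈ J'0) := by
      intro j
      induction j with
      | zero => exact fun h => absurd h (by omega)
      | succ n ih =>
        intro h1 h2
        have hmem : μ + ((n+1:ℕ):ZMod f) ∈ Trun f k μ :=
          (hT _).2 ⟨n+1, by omega, by omega, rfl⟩
        have hwn : w (μ + ((n+1:ℕ):ZMod f)) = 1 := by
          rcases Nat.eq_zero_or_pos n with hn | hn
          · subst hn
            have hc : ((0+1:ℕ):ZMod f) = 1 := by norm_num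
            rw [hc]
            exact hw1
          · obtain ⟨hwn', hmem'⟩ := ih (by omega) (by omega)
            have hmemn : μ + ((n:ℕ):ZMod f) ∈ Trun f k μ :=
              (hT _).2 ⟨n, by omega, by omega, rfl⟩
            have heq : (μ + ((n:ℕ):ZMod f)) + 1 = μ + ((n+1:ℕ):ZMod f) := by
              push_cast; ring
            have hk2 : k ((μ + ((n:ℕ):ZMod f)) + 1) = 1 := by
              rw [heq]; exact hs0spec (n+1) (by omega) h2
            have h5 := ((hprop _ hmemn).1 hwn').2 hk2
            rwa [heq] at h5
        exact ⟨hwn, ((hprop _ hmem).1 hwn).1⟩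
    have hclean : ∀ i, i ∈ Trun f k μ → i ∈ J'0 := by
      intro i hi
      obtain ⟨j, h1, h2, rfl⟩ := (hT i).1 hi
      exact (hchain j h1 h2).2
    -- construction: Jμ = J'0 \ T
    set w' : ZMod f → ℤ := fun i => if i ∈ Trun f k μ then (-1:ℤ) else 0 with hw'def
    have hpt : ∀ i, sW f (bmu1 p f k μ) (bmu2 f μ) (J'0 \ Trun f k μ) i
        - sW f (bp1 p f k) (zero2 f) J'0 i = (p:ℤ) * w' i - w' (i+1) := by
      intro i
      by_cases hiμ : i = μ
      · rw [hiμ]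
        have hmem : μ ∈ J'0 \ Trun f k μ := ⟨hJμ, hμT⟩
        have e1 : w' μ = 0 := by rw [hw'def]; simp [hμT]
        have e2 : w' (μ+1) = -1 := by rw [hw'def]; simp [hμ1T]
        have e3 : sW f (bmu1 p f k μ) (bmu2 f μ) (J'0 \ Trun f k μ) μ = k μ - 1 := by
          simp [sW, bmu1, hmem]
        rw [e1, e2, e3, hr0val, if_pos hJμ, hbp1μ]; ring
      · by_cases hiT : i ∈ Trun f k μ
        · have hiJ : i ∈ J'0 := hclean i hiT
          have hnot : i ∉ J'0 \ Trun f k μ := fun h => h.2 hiT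
          have e1 : w' i = -1 := by rw [hw'def]; simp [hiT]
          have e2 : sW f (bmu1 p f k μ) (bmu2 f μ) (J'0 \ Trun f k μ) i = 0 := by
            simp [sW, bmu2, hnot, hiμ]
          have hki : k i = 1 := hTk i hiT
          by_cases hk2 : k (i+1) = 1
          · have e3 : w' (i+1) = -1 := by
              rw [hw'def]; simp [hTsucc1 i hiT hk2]
            have e4 : bp1 p f k i = (p:ℤ) - 1 := by simp [bp1, hki, hk2]
            rw [e1, e2, e3, hr0val, if_pos hiJ, e4]; ring
          · have hnT : i + 1 ∉ Trun f k μ := fun h => hk2 (hTk _ h)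
            have e3 : w' (i+1) = 0 := by rw [hw'def]; simp [hnT]
            have e4 : bp1 p f k i = (p:ℤ) := by simp [bp1, hki, hk2]
            rw [e1, e2, e3, hr0val, if_pos hiJ, e4]; ring
        · have e1 : w' i = 0 := by rw [hw'def]; simp [hiT]
          have hnT : i + 1 ∉ Trun f k μ := by
            intro h
            rcases hTpred i h with h' | h'
            · exact hiμ h'
            · exact hiT h'
          have e2 : w' (i+1) = 0 := by rw [hw'def]; simp [hnT]
          by_cases hJ : i ∈ J'0
          · have hmem : i ∈ J'0 \ Trun f k μ := ⟨hJ, hiT⟩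
            have e3 : sW f (bmu1 p f k μ) (bmu2 f μ) (J'0 \ Trun f k μ) i = bp1 p f k i := by
              simp [sW, bmu1, hmem, hiμ]
            rw [e1, e2, e3, hr0val, if_pos hJ]; ring
          · have hnot : i ∉ J'0 \ Trun f k μ := fun h => hJ h.1
            have e3 : sW f (bmu1 p f k μ) (bmu2 f μ) (J'0 \ Trun f k μ) i = 0 := by
              simp [sW, bmu2, hnot, hiμ]
            rw [e1, e2, e3, hr0val, if_neg hJ]; ring
    have hSig : Sig p f (sW f (bmu1 p f k μ) (bmu2 f μ) (J'0 \ Trun f k μ))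
        - Sig p f (sW f (bp1 p f k) (zero2 f) J'0) = ((p:ℤ)^f - 1) * w' 0 := by
      rw [← Sig_sub]
      calc Sig p f (fun i => sW f (bmu1 p f k μ) (bmu2 f μ) (J'0 \ Trun f k μ) i
            - sW f (bp1 p f k) (zero2 f) J'0 i)
          = Sig p f (fun i => (p:ℤ) * w' i - w' (i+1)) := by
            congr 1; funext i; exact hpt i
        _ = ((p:ℤ)^f - 1) * w' 0 := Sig_carry p f hf w'
    have hcongr : Int.ModEq ((p:ℤ)^f - 1)
        (Sig p f (sW f (bmu1 p f k μ) (bmu2 f μ) (J'0 \ Trun f k μ)))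
        (Sig p f (sW f (bmu1 p f k μ) (bmu2 f μ) (Jnu0 μ))) := by
      refine (Int.modEq_iff_dvd.2 ⟨-(w' 0), ?_⟩).trans (hs μ ⟨hμ1, hμ2⟩)
      rw [mul_neg, ← hSig]; ring
    refine ⟨J'0, J'0 \ Trun f k μ, Int.ModEq.refl _, Int.ModEq.refl _, hcongr,
      tW_modEq_of_sW _ _ _ _ hcongr, ?_⟩
    intro i hi
    exact ⟨fun h => ⟨h, hi⟩, fun h => h.1⟩
  · -- case μ ∉ J'0 : the run is disjoint from J'0
    have hchain : ∀ j : ℕ, 1 ≤ j → j ≤ s0 →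
        (w (μ + (j:ZMod f)) = -1 ∧ μ + (j:ZMod f) ∉ J'0) := by
      intro j
      induction j with
      | zero => exact fun h => absurd h (by omega)
      | succ n ih =>
        intro h1 h2
        have hmem : μ + ((n+1:ℕ):ZMod f) ∈ Trun f k μ :=
          (hT _).2 ⟨n+1, by omega, by omega, rfl⟩
        have hwn : w (μ + ((n+1:ℕ):ZMod f)) = -1 := by
          rcases Nat.eq_zero_or_pos n with hn | hn
          · subst hn
            have hc : ((0+1:ℕ):ZMod f) = 1 := by norm_num
            rw [hc]
            exact hw1
          · obtain ⟨hwn', hmem'⟩ := ih (by omega) (by omega)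
            have hmemn : μ + ((n:ℕ):ZMod f) ∈ Trun f k μ :=
              (hT _).2 ⟨n, by omega, by omega, rfl⟩
            have heq : (μ + ((n:ℕ):ZMod f)) + 1 = μ + ((n+1:ℕ):ZMod f) := by
              push_cast; ring
            have hk2 : k ((μ + ((n:ℕ):ZMod f)) + 1) = 1 := by
              rw [heq]; exact hs0spec (n+1) (by omega) h2
            have h5 := ((hprop _ hmemn).2 hwn').2 hk2
            rwa [heq] at h5
        exact ⟨hwn, ((hprop _ hmem).2 hwn).1⟩
    have hclean : ∀ i, i ∈ Trun f k μ → i ∉ J'0 := by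
      intro i hi
      obtain ⟨j, h1, h2, rfl⟩ := (hT i).1 hi
      exact (hchain j h1 h2).2
    -- construction: Jμ = J'0 ∪ T
    set w' : ZMod f → ℤ := fun i => if i ∈ Trun f k μ then (1:ℤ) else 0 with hw'def
    have hpt : ∀ i, sW f (bmu1 p f k μ) (bmu2 f μ) (J'0 ∪ Trun f k μ) i
        - sW f (bp1 p f k) (zero2 f) J'0 i = (p:ℤ) * w' i - w' (i+1) := by
      intro i
      by_cases hiμ : i = μ
      · rw [hiμ]
        have hmem : μ ∉ J'0 ∪ Trun f k μ := by
          intro h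
          rcases h with h | h
          · exact hJμ h
          · exact hμT h
        have e1 : w' μ = 0 := by rw [hw'def]; simp [hμT]
        have e2 : w' (μ+1) = 1 := by rw [hw'def]; simp [hμ1T]
        have e3 : sW f (bmu1 p f k μ) (bmu2 f μ) (J'0 ∪ Trun f k μ) μ = -1 := by
          simp [sW, bmu2, hmem]
        rw [e1, e2, e3, hr0val, if_neg hJμ]; ring
      · by_cases hiT : i ∈ Trun f k μ
        · have hiJ : i ∉ J'0 := hclean i hiT
          have hmem : i ∈ J'0 ∪ Trun f k μ := Or.inr hiT
          have e1 : w' i = 1 := by rw [hw'def]; simp [hiT]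
          have e2 : sW f (bmu1 p f k μ) (bmu2 f μ) (J'0 ∪ Trun f k μ) i = bp1 p f k i := by
            simp [sW, bmu1, hmem, hiμ]
          have hki : k i = 1 := hTk i hiT
          by_cases hk2 : k (i+1) = 1
          · have e3 : w' (i+1) = 1 := by
              rw [hw'def]; simp [hTsucc1 i hiT hk2]
            have e4 : bp1 p f k i = (p:ℤ) - 1 := by simp [bp1, hki, hk2]
            rw [e1, e2, e3, hr0val, if_neg hiJ, e4]; ring
          · have hnT : i + 1 ∉ Trun f k μ := fun h => hk2 (hTk _ h)
            have e3 : w' (i+1) = 0 := by rw [hw'def]; simp [hnT]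
            have e4 : bp1 p f k i = (p:ℤ) := by simp [bp1, hki, hk2]
            rw [e1, e2, e3, hr0val, if_neg hiJ, e4]; ring
        · have e1 : w' i = 0 := by rw [hw'def]; simp [hiT]
          have hnT : i + 1 ∉ Trun f k μ := by
            intro h
            rcases hTpred i h with h' | h'
            · exact hiμ h'
            · exact hiT h'
          have e2 : w' (i+1) = 0 := by rw [hw'def]; simp [hnT]
          by_cases hJ : i ∈ J'0
          · have hmem : i ∈ J'0 ∪ Trun f k μ := Or.inl hJ
            have e3 : sW f (bmu1 p f k μ) (bmu2 f μ) (J'0 ∪ Trun f k μ) i = bp1 p f k i := by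
              simp [sW, bmu1, hmem, hiμ]
            rw [e1, e2, e3, hr0val, if_pos hJ]; ring
          · have hnot : i ∉ J'0 ∪ Trun f k μ := by
              intro h
              rcases h with h | h
              · exact hJ h
              · exact hiT h
            have e3 : sW f (bmu1 p f k μ) (bmu2 f μ) (J'0 ∪ Trun f k μ) i = 0 := by
              simp [sW, bmu2, hnot, hiμ]
            rw [e1, e2, e3, hr0val, if_neg hJ]; ring
    have hSig : Sig p f (sW f (bmu1 p f k μ) (bmu2 f μ) (J'0 ∪ Trun f k μ))
        - Sig p f (sW f (bp1 p f k) (zero2 f) J'0) = ((p:ℤ)^f - 1) * w' 0 := by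
      rw [← Sig_sub]
      calc Sig p f (fun i => sW f (bmu1 p f k μ) (bmu2 f μ) (J'0 ∪ Trun f k μ) i
            - sW f (bp1 p f k) (zero2 f) J'0 i)
          = Sig p f (fun i => (p:ℤ) * w' i - w' (i+1)) := by
            congr 1; funext i; exact hpt i
        _ = ((p:ℤ)^f - 1) * w' 0 := Sig_carry p f hf w'
    have hcongr : Int.ModEq ((p:ℤ)^f - 1)
        (Sig p f (sW f (bmu1 p f k μ) (bmu2 f μ) (J'0 ∪ Trun f k μ)))
        (Sig p f (sW f (bmu1 p f k μ) (bmu2 f μ) (Jnu0 μ))) := by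
      refine (Int.modEq_iff_dvd.2 ⟨-(w' 0), ?_⟩).trans (hs μ ⟨hμ1, hμ2⟩)
      rw [mul_neg, ← hSig]; ring
    refine ⟨J'0, J'0 ∪ Trun f k μ, Int.ModEq.refl _, Int.ModEq.refl _, hcongr,
      tW_modEq_of_sW _ _ _ _ hcongr, ?_⟩
    intro i hi
    constructor
    · exact fun h => Or.inl h
    · intro h
      rcases h with h | h
      · exact h
      · exact absurd h hi
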